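/- Let (V, <) be a finite strict partial order such that V, viewed as a forest (where the parent of v is the minimum of the linearly ordered set {w | v < w} when nonempty), assigns to each element at most one parent; i.e., for each v ∈ V the set {w ∈ V | v < w} is linearly ordered by <. Let Γ be a subset of V (the 'occurring' variables) of size at most N. If no element v ∉ Γ is a leaf (has no child), and no element v ∉ Γ has all of its children outside Γ, then |V| ≤ 2N. -/

import Mathlib

/-! Every element outside `Γ` has a child in `Γ`, and an element is a child of at most one
parent because its strict upper set is a chain. So choosing such a child injects `Γᶜ` into `Γ`,
and `|V| = |Γ| + |Γᶜ| ≤ 2|Γ|`. -/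

def IsChild {V : Type} (lt : V → V → Prop) (w v : V) : Prop :=
  lt w v ∧ ¬ ∃ u, lt w u ∧ lt u v

section

variable {V : Type} {lt : V → V → Prop}

theorem IsChild.parent_unique
    (hlin : ∀ v w₁ w₂, lt v w₁ → lt v w₂ → lt w₁ w₂ ∨ w₁ = w₂ ∨ lt w₂ w₁)
    {w v₁ v₂ : V} (h₁ : IsChild lt w v₁) (h₂ : IsChild lt w v₂) : v₁ = v₂ := by
  rcases hlin w v₁ v₂ h₁.1 h₂.1 with h | h | h
  · exact absurd ⟨v₁, h₁.1, h⟩ h₂.2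
  · exact h
  · exact absurd ⟨v₂, h₂.1, h⟩ h₁.2

theorem card_le_two_mul_card_of_forall_notMem_exists_isChild [Fintype V]
    (hlin : ∀ v w₁ w₂, lt v w₁ → lt v w₂ → lt w₁ w₂ ∨ w₁ = w₂ ∨ lt w₂ w₁)
    (Γ : Finset V) (hchild : ∀ v ∉ Γ, ∃ w, IsChild lt w v ∧ w ∈ Γ) :
    Fintype.card V ≤ 2 * Γ.card := by
  classical
  have hcompl : Γᶜ.card ≤ Γ.card :=
    Finset.card_le_card_of_forall_subsingleton (fun v w => IsChild lt w v)
      (fun v hv => (hchild v (Finset.mem_compl.mp hv)).imp fun _ h => h.symm)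
      (fun _ _ _ h₁ _ h₂ => h₁.2.parent_unique hlin h₂.2)
  have := Finset.card_add_card_compl Γ
  omega

end

theorem constraint_size_bound_general {V : Type} [Fintype V] (lt : V → V → Prop)
    (hlin : ∀ v w₁ w₂, lt v w₁ → lt v w₂ → lt w₁ w₂ ∨ w₁ = w₂ ∨ lt w₂ w₁)
    (Γ : Finset V) (N : ℕ) (hΓ : Γ.card ≤ N)
    (hchild : ∀ v ∉ Γ, ∃ w, IsChild lt w v ∧ w ∈ Γ) :
    Fintype.card V ≤ 2 * N :=
  (card_le_two_mul_card_of_forall_notMem_exists_isChild hlin Γ hchild).trans (by omega)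

/-- Lemma 5.2: in a finite "constraint" `(V, <)` (a strict partial order in which the
strict upper set of every element is linearly ordered), if `Γ ⊆ V` has at most `N`
elements, no element outside `Γ` is a leaf, and every element outside `Γ` has some
child in `Γ`, then `|V| ≤ 2N`. -/
theorem constraint_size_bound {V : Type} [Fintype V] (lt : V → V → Prop)
    (hirr : ∀ v, ¬ lt v v)
    (htrans : ∀ a b c, lt a b → lt b c → lt a c)
    (hlin : ∀ v w₁ w₂, lt v w₁ → lt v w₂ → lt w₁ w₂ ∨ w₁ = w₂ ∨ lt w₂ w₁)
    (Γ : Finset V) (N : ℕ) (hΓ : Γ.card ≤ N)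
    (hleaf : ∀ v ∉ Γ, ∃ w, IsChild lt w v)
    (hchild : ∀ v ∉ Γ, ∃ w, IsChild lt w v ∧ w ∈ Γ) :
    Fintype.card V ≤ 2 * N :=
  constraint_size_bound_general lt hlin Γ N hΓ hchild
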